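/- arXiv:1307.5777 — 2 statements merged into one kernel-verified Lean document; each statement's English description precedes it below -/
import Mathlib

section
/- If G is a symmetric generalized Hadamard matrix (G = Gᵀ and G·conj(G)ᵀ = q·I_q), then for all p,t ∈ V(n,q): Σ_{s ∈ V(n,q)} MG(p;s) · conj(MG(s;t)) = qⁿ · δ_{p,t}. -/
open Finset

/-- `V n q` is the set of weak compositions of `n` into `q` parts. -/
def V (n q : ℕ) : Finset (Fin q → ℕ) :=
  (Fintype.piFinset fun _ : Fin q => Finset.range (n + 1)).filter fun p => ∑ i, p i = n

open scoped Classical in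
/-- The m-polynomial `MG(p; s)` with respect to the matrix `G`. -/
noncomputable def MG {q : ℕ} (n : ℕ) (G : Matrix (Fin q) (Fin q) ℂ)
    (p s : Fin q → ℕ) : ℂ :=
  ∑ r ∈ (Fintype.piFinset fun _ : Fin q => Fintype.piFinset fun _ : Fin q =>
      Finset.range (n + 1)).filter
      (fun r => (∀ i, ∑ j, r i j = s i) ∧ (∀ j, ∑ i, r i j = p j)),
    ((∏ i, Nat.factorial (s i) : ℕ) : ℂ) / ((∏ i, ∏ j, Nat.factorial (r i j) : ℕ) : ℂ) *
      ∏ i, ∏ j, G i j ^ r i j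

/-!
`MG n A p s` is the coefficient of `X ^ p` in `∏ i, (∑ j, A i j • X j) ^ s i`, a polynomial
homogeneous of degree `∑ i, s i`. Substituting the linear forms of `B` into those of `A` yields the
linear forms of `A * B`, so `MG (A * B) p t = ∑ s, MG A s t * MG B p s`. Conjugation turns `MG G`
into `MG (G.map star)`, which is `MG Gᴴ` for symmetric `G`, and `Gᴴ * G = (G * Gᴴ)ᵀ = q • 1`;
finally `MG (q • 1) p t` is the coefficient of `X ^ p` in `q ^ n X ^ t`.
-/

open MvPolynomial
open scoped Matrix

lemma mem_V_iff {n q : ℕ} {p : Fin q → ℕ} : p ∈ V n q ↔ ∑ i, p i = n := by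
  refine ⟨fun h => (mem_filter.mp h).2, fun h => ?_⟩
  refine mem_filter.mpr ⟨Fintype.mem_piFinset.mpr fun i => ?_, h⟩
  exact mem_range_succ_iff.mpr (h ▸ single_le_sum (by simp) (mem_univ i))

lemma le_of_mem_V {n q : ℕ} {p : Fin q → ℕ} (hp : p ∈ V n q) (i : Fin q) : p i ≤ n :=
  mem_range_succ_iff.mp (Fintype.mem_piFinset.mp (mem_filter.mp hp).1 i)

lemma MvPolynomial.monomial_equivFunOnFinite_symm {σ R : Type*} [Fintype σ] [CommSemiring R]
    (u : σ → ℕ) (c : R) :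
    monomial (Finsupp.equivFunOnFinite.symm u) c = C c * ∏ j, X j ^ u j := by
  rw [monomial_eq, Finsupp.prod_fintype _ _ (by simp)]
  rfl

lemma Matrix.conjTranspose_mul_self_of_transpose_eq {ι α : Type*} [Fintype ι] [DecidableEq ι]
    [CommSemiring α] [Star α] {G : Matrix ι ι α} {c : α} (hG : Gᵀ = G) (h : G * Gᴴ = c • 1) :
    Gᴴ * G = c • 1 :=
  calc Gᴴ * G = (Gᵀ * Gᴴᵀ)ᵀ := by simp only [Matrix.transpose_mul, Matrix.transpose_transpose]
    _ = (c • 1)ᵀ := by rw [← Matrix.conjTranspose_transpose_eq_transpose_conjTranspose, hG, h]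
    _ = c • 1 := by simp

section RowForms

variable {R : Type*} [CommSemiring R] {q : ℕ}

noncomputable def rowForm (A : Matrix (Fin q) (Fin q) R) (i : Fin q) : MvPolynomial (Fin q) R :=
  ∑ j, C (A i j) * X j

noncomputable def rowFormPow (A : Matrix (Fin q) (Fin q) R) (s : Fin q → ℕ) :
    MvPolynomial (Fin q) R :=
  ∏ i, rowForm A i ^ s i

lemma bind₁_rowForm (A B : Matrix (Fin q) (Fin q) R) (i : Fin q) :
    bind₁ (rowForm B) (rowForm A i) = rowForm (A * B) i := by
  simp only [rowForm, map_sum, map_mul, bind₁_C_right, bind₁_X_right, Finset.mul_sum,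
    Matrix.mul_apply, Finset.sum_mul]
  rw [Finset.sum_comm]
  simp only [mul_assoc]

lemma bind₁_rowFormPow (A B : Matrix (Fin q) (Fin q) R) (s : Fin q → ℕ) :
    bind₁ (rowForm B) (rowFormPow A s) = rowFormPow (A * B) s := by
  simp only [rowFormPow, map_prod, map_pow, bind₁_rowForm]

lemma bind₁_monomial_rowForm (B : Matrix (Fin q) (Fin q) R) (s : Fin q → ℕ) (c : R) :
    bind₁ (rowForm B) (monomial (Finsupp.equivFunOnFinite.symm s) c) = C c * rowFormPow B s := by
  simp only [monomial_equivFunOnFinite_symm, map_mul, bind₁_C_right, map_prod, map_pow,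
    bind₁_X_right, rowFormPow]

lemma rowFormPow_smul_one (c : R) (s : Fin q → ℕ) :
    rowFormPow (c • 1 : Matrix (Fin q) (Fin q) R) s =
      monomial (Finsupp.equivFunOnFinite.symm s) (c ^ ∑ i, s i) := by
  have hrow (i : Fin q) : rowForm (c • 1 : Matrix (Fin q) (Fin q) R) i = C c * X i := by
    simp [rowForm, Matrix.one_apply, apply_ite C, ite_mul]
  simp only [rowFormPow, hrow, mul_pow, prod_mul_distrib, ← C_pow, ← map_prod, prod_pow_eq_pow_sum,
    monomial_equivFunOnFinite_symm]

lemma isHomogeneous_rowFormPow (A : Matrix (Fin q) (Fin q) R) (s : Fin q → ℕ) :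
    (rowFormPow A s).IsHomogeneous (∑ i, s i) := by
  have hrow (i : Fin q) : (rowForm A i).IsHomogeneous 1 :=
    IsHomogeneous.sum _ _ _ fun j _ => isHomogeneous_C_mul_X (A i j) j
  simpa [rowFormPow] using IsHomogeneous.prod _ _ _ fun i _ => (hrow i).pow (s i)

lemma rowFormPow_eq_sum (A : Matrix (Fin q) (Fin q) R) (s : Fin q → ℕ) :
    rowFormPow A s = ∑ r ∈ Fintype.piFinset fun i => piAntidiag univ (s i),
      monomial (Finsupp.equivFunOnFinite.symm fun j => ∑ i, r i j)
        ((∏ i, (Nat.multinomial univ (r i) : R)) * ∏ i, ∏ j, A i j ^ r i j) := by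
  simp only [rowFormPow, rowForm, sum_pow_eq_sum_piAntidiag, prod_univ_sum]
  refine sum_congr rfl fun r _ => ?_
  have hX : ∏ i, ∏ j, (X j : MvPolynomial (Fin q) R) ^ r i j = ∏ j, X j ^ ∑ i, r i j := by
    rw [prod_comm]
    exact prod_congr rfl fun j _ => prod_pow_eq_pow_sum _ _ _
  simp only [monomial_equivFunOnFinite_symm, ← hX, mul_pow, ← C_pow, prod_mul_distrib, C_mul,
    map_prod, map_natCast]
  ring

lemma coeff_rowFormPow (A : Matrix (Fin q) (Fin q) R) (s p : Fin q → ℕ) :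
    coeff (Finsupp.equivFunOnFinite.symm p) (rowFormPow A s) =
      ∑ r ∈ (Fintype.piFinset fun i => piAntidiag univ (s i)).filter
          (fun r => ∀ j, ∑ i, r i j = p j),
        (∏ i, (Nat.multinomial univ (r i) : R)) * ∏ i, ∏ j, A i j ^ r i j := by
  rw [rowFormPow_eq_sum, coeff_sum, sum_filter]
  refine sum_congr rfl fun r _ => ?_
  simp only [coeff_monomial, EmbeddingLike.apply_eq_iff_eq, funext_iff]

end RowForms

lemma MG_eq_coeff_rowFormPow {q n : ℕ} (A : Matrix (Fin q) (Fin q) ℂ) (p s : Fin q → ℕ)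
    (hs : ∀ i, s i ≤ n) :
    MG n A p s = coeff (Finsupp.equivFunOnFinite.symm p) (rowFormPow A s) := by
  rw [coeff_rowFormPow, MG]
  refine sum_congr ?_ fun r hr => ?_
  · ext r
    simp only [mem_filter, Fintype.mem_piFinset, mem_range_succ_iff, mem_piAntidiag, mem_univ,
      implies_true, and_true]
    refine ⟨fun ⟨_, hrow, hcol⟩ => ⟨hrow, hcol⟩, fun ⟨hrow, hcol⟩ => ⟨fun i j => ?_, hrow, hcol⟩⟩
    exact (single_le_sum (by simp) (mem_univ j)).trans ((hrow i).trans_le (hs i))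
  · have hrow : ∀ i, ∑ j, r i j = s i := by simpa [mem_piAntidiag] using (mem_filter.mp hr).1
    have hfac : ((∏ i, (s i).factorial : ℕ) : ℂ) =
        (∏ i, ∏ j, (r i j).factorial : ℕ) * ∏ i, (Nat.multinomial univ (r i) : ℂ) := by
      simp only [← Nat.cast_prod, ← Nat.cast_mul, ← prod_mul_distrib, Nat.multinomial_spec, hrow]
    have hne : ((∏ i, ∏ j, (r i j).factorial : ℕ) : ℂ) ≠ 0 :=
      Nat.cast_ne_zero.mpr (by positivity)
    rw [hfac, mul_div_cancel_left₀ _ hne]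

lemma rowFormPow_eq_sum_MG {q n : ℕ} (A : Matrix (Fin q) (Fin q) ℂ) {t : Fin q → ℕ}
    (ht : t ∈ V n q) :
    rowFormPow A t = ∑ s ∈ V n q, monomial (Finsupp.equivFunOnFinite.symm s) (MG n A s t) := by
  ext u
  obtain ⟨u, rfl⟩ := Finsupp.equivFunOnFinite.symm.surjective u
  simp only [coeff_sum, coeff_monomial, EmbeddingLike.apply_eq_iff_eq, sum_ite_eq']
  split_ifs with hu
  · exact (MG_eq_coeff_rowFormPow A u t (le_of_mem_V ht)).symm
  · refine (isHomogeneous_rowFormPow A t).coeff_eq_zero ?_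
    rw [Finsupp.degree_eq_sum, mem_V_iff.mp ht, Finsupp.coe_equivFunOnFinite_symm]
    exact mt mem_V_iff.mpr hu

lemma MG_mul {q n : ℕ} (A B : Matrix (Fin q) (Fin q) ℂ) (p : Fin q → ℕ) {t : Fin q → ℕ}
    (ht : t ∈ V n q) :
    MG n (A * B) p t = ∑ s ∈ V n q, MG n A s t * MG n B p s := by
  rw [MG_eq_coeff_rowFormPow _ p t (le_of_mem_V ht), ← bind₁_rowFormPow, rowFormPow_eq_sum_MG A ht,
    map_sum, coeff_sum]
  refine sum_congr rfl fun s hs => ?_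
  rw [bind₁_monomial_rowForm, coeff_C_mul, MG_eq_coeff_rowFormPow B p s (le_of_mem_V hs)]

lemma MG_smul_one {q n : ℕ} (c : ℂ) (p : Fin q → ℕ) {t : Fin q → ℕ} (ht : t ∈ V n q) :
    MG n (c • 1) p t = if p = t then c ^ n else 0 := by
  rw [MG_eq_coeff_rowFormPow _ p t (le_of_mem_V ht), rowFormPow_smul_one, mem_V_iff.mp ht]
  simp only [coeff_monomial, EmbeddingLike.apply_eq_iff_eq, eq_comm]

lemma star_MG {q n : ℕ} (A : Matrix (Fin q) (Fin q) ℂ) (p s : Fin q → ℕ) :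
    starRingEnd ℂ (MG n A p s) = MG n (A.map star) p s := by
  simp only [MG, map_sum, map_mul, map_div₀, map_natCast, map_prod, map_pow, Matrix.map_apply]
  rfl

theorem stmt5_general (q n : ℕ)
    (G : Matrix (Fin q) (Fin q) ℂ) (hsymm : ∀ i j, G i j = G j i)
    (hG : G * G.conjTranspose = (q : ℂ) • 1)
    (p t : Fin q → ℕ) (ht : t ∈ V n q) :
    ∑ s ∈ V n q, MG n G p s * (starRingEnd ℂ) (MG n G s t) =
      (q : ℂ) ^ n * (if p = t then 1 else 0) := by
  have hGt : Gᵀ = G := Matrix.ext fun i j => hsymm j i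
  have hconj : G.map star = Gᴴ := by rw [← Matrix.transpose_conjTranspose, hGt]
  calc ∑ s ∈ V n q, MG n G p s * (starRingEnd ℂ) (MG n G s t)
      = ∑ s ∈ V n q, MG n Gᴴ s t * MG n G p s := by simp only [star_MG, hconj, mul_comm]
    _ = MG n (Gᴴ * G) p t := (MG_mul _ _ p ht).symm
    _ = (q : ℂ) ^ n * (if p = t then 1 else 0) := by
        rw [Matrix.conjTranspose_mul_self_of_transpose_eq hGt hG, MG_smul_one _ p ht]
        simp

theorem stmt5 (q n : ℕ) (hq : 2 ≤ q) (hn : 0 < n)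
    (G : Matrix (Fin q) (Fin q) ℂ) (hsymm : ∀ i j, G i j = G j i)
    (hG : G * G.conjTranspose = (q : ℂ) • 1)
    (p t : Fin q → ℕ) (hp : p ∈ V n q) (ht : t ∈ V n q) :
    ∑ s ∈ V n q, MG n G p s * (starRingEnd ℂ) (MG n G s t) =
      (q : ℂ) ^ n * (if p = t then 1 else 0) :=
  stmt5_general q n G hsymm hG p t ht
end

section
/- Let G be a generalized Hadamard matrix (G·conj(G)ᵀ = q·I_q) with symmetric core, first row all 1, and first column entries -1 below the top entry. Then for all p,t ∈ V(n,q): Σ_{s ∈ V(n,q)} (-1)^{s_0} · MG(p;s) · conj(MG(s;t)) = (-1)^{t_0} · qⁿ · δ_{p,t}. -/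
open Finset

/-!
`MG n A p s` is the coefficient of `x^p` in `∏ᵢ (∑ⱼ Aᵢⱼ xⱼ) ^ sᵢ`: it is the matrix of the
substitution `xᵢ ↦ ∑ⱼ Aᵢⱼ xⱼ` on homogeneous polynomials of degree `n`. Hence
`∑ₛ MG_A(p; s) MG_B(s; t) = MG_{BA}(p; t)`, diagonal matrices act diagonally, and conjugating
the entries of `A` conjugates `MG`. The normalisation of `G` says exactly that `Gᵀ = D G D`
for `D = diag(-1, 1, …, 1)`, so `conj(G) D G = D Gᴴ G = q D`, and the signed sum is the
`(p, t)` entry of the action of `q D`, namely `δ_{p,t} (-1)^{t₀} qⁿ`.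
-/

open MvPolynomial

section MPolynomials

variable {q n : ℕ}

noncomputable def linearForm (A : Matrix (Fin q) (Fin q) ℂ) (i : Fin q) :
    MvPolynomial (Fin q) ℂ :=
  ∑ j, C (A i j) * X j

noncomputable def linearFormProd (A : Matrix (Fin q) (Fin q) ℂ) (s : Fin q → ℕ) :
    MvPolynomial (Fin q) ℂ :=
  ∏ i, linearForm A i ^ s i

lemma linearFormProd_eq_sum_piAntidiag (A : Matrix (Fin q) (Fin q) ℂ) (s : Fin q → ℕ) :
    linearFormProd A s = ∑ r ∈ Fintype.piFinset fun i => piAntidiag univ (s i),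
      C ((∏ i, (Nat.multinomial univ (r i) : ℂ)) * ∏ i, ∏ j, A i j ^ r i j) *
        ∏ j, X j ^ ∑ i, r i j := by
  simp_rw [linearFormProd, linearForm, sum_pow_eq_sum_piAntidiag, prod_univ_sum]
  refine sum_congr rfl fun r _ => ?_
  simp_rw [mul_pow, prod_mul_distrib, ← map_pow, ← map_prod, map_mul, map_prod, map_natCast,
    prod_comm (f := fun i j => (X j : MvPolynomial (Fin q) ℂ) ^ r i j), prod_pow_eq_pow_sum]
  ring

lemma factorial_div_prod_factorial_eq_multinomial {s : Fin q → ℕ} {r : Fin q → Fin q → ℕ}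
    (hrow : ∀ i, ∑ j, r i j = s i) :
    ((∏ i, (s i).factorial : ℕ) : ℂ) / ((∏ i, ∏ j, (r i j).factorial : ℕ) : ℂ) =
      ∏ i, (Nat.multinomial univ (r i) : ℂ) := by
  have hpos : ((∏ i, ∏ j, (r i j).factorial : ℕ) : ℂ) ≠ 0 :=
    Nat.cast_ne_zero.mpr (by positivity)
  rw [div_eq_iff hpos, ← Nat.cast_prod, ← Nat.cast_mul, ← prod_mul_distrib]
  congr 1
  refine prod_congr rfl fun i _ => ?_
  rw [mul_comm, Nat.multinomial_spec, hrow]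

lemma mem_MG_indices_iff {p s : Fin q → ℕ} (hs : ∑ i, s i = n)
    (r : Fin q → Fin q → ℕ) :
    r ∈ (Fintype.piFinset fun _ : Fin q => Fintype.piFinset fun _ : Fin q =>
      range (n + 1)).filter (fun r => (∀ i, ∑ j, r i j = s i) ∧ (∀ j, ∑ i, r i j = p j)) ↔
    r ∈ (Fintype.piFinset fun i => piAntidiag univ (s i)).filter
      (fun r => ∀ j, ∑ i, r i j = p j) := by
  simp only [mem_filter, Fintype.mem_piFinset, mem_range, mem_piAntidiag, mem_univ,
    implies_true, and_true]
  refine ⟨fun ⟨_, hrow, hcol⟩ => ⟨hrow, hcol⟩, fun ⟨hrow, hcol⟩ => ⟨fun i j => ?_, hrow, hcol⟩⟩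
  calc r i j ≤ ∑ j, r i j := single_le_sum (fun _ _ => Nat.zero_le _) (mem_univ j)
    _ = s i := hrow i
    _ ≤ ∑ i, s i := single_le_sum (fun _ _ => Nat.zero_le _) (mem_univ i)
    _ < n + 1 := by omega

lemma MG_eq_sum_piAntidiag (A : Matrix (Fin q) (Fin q) ℂ) (p : Fin q → ℕ)
    {s : Fin q → ℕ} (hs : ∑ i, s i = n) :
    MG n A p s = ∑ r ∈ (Fintype.piFinset fun i => piAntidiag univ (s i)).filter
        (fun r => ∀ j, ∑ i, r i j = p j),
      (∏ i, (Nat.multinomial univ (r i) : ℂ)) * ∏ i, ∏ j, A i j ^ r i j := by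
  classical
  refine sum_congr (ext (mem_MG_indices_iff hs)) fun r hr => ?_
  simp only [mem_filter, Fintype.mem_piFinset, mem_piAntidiag] at hr
  rw [factorial_div_prod_factorial_eq_multinomial fun i => (hr.1 i).1]

lemma sum_mem_V {s : Fin q → ℕ} (hs : ∑ i, s i = n) {r : Fin q → Fin q → ℕ}
    (hr : r ∈ Fintype.piFinset fun i => piAntidiag univ (s i)) :
    (fun j => ∑ i, r i j) ∈ V n q := by
  simp only [Fintype.mem_piFinset, mem_piAntidiag] at hr
  have htotal : ∑ j, ∑ i, r i j = n := by
    rw [sum_comm, ← hs]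
    exact sum_congr rfl fun i _ => (hr i).1
  simp only [V, mem_filter, Fintype.mem_piFinset, mem_range]
  refine ⟨fun j => ?_, htotal⟩
  have := single_le_sum (f := fun j => ∑ i, r i j) (fun _ _ => Nat.zero_le _) (mem_univ j)
  omega

lemma linearFormProd_eq_sum_MG (A : Matrix (Fin q) (Fin q) ℂ) {s : Fin q → ℕ}
    (hs : ∑ i, s i = n) :
    linearFormProd A s = ∑ p ∈ V n q, C (MG n A p s) * ∏ j, X j ^ p j := by
  classical
  rw [linearFormProd_eq_sum_piAntidiag, ← sum_fiberwise_of_maps_to fun r => sum_mem_V hs]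
  refine sum_congr rfl fun p _ => ?_
  rw [MG_eq_sum_piAntidiag A p hs, map_sum, sum_mul]
  refine sum_congr (by simp [funext_iff]) fun r hr => ?_
  simp_rw [(mem_filter.mp hr).2]

lemma coeff_prod_X_pow_equivFunOnFinite (p p' : Fin q → ℕ) :
    coeff (Finsupp.equivFunOnFinite.symm p) (∏ j, (X j : MvPolynomial (Fin q) ℂ) ^ p' j) =
      if p' = p then 1 else 0 := by
  classical
  rw [coeff_prod_X_pow]
  congr 1
  simp [Finsupp.ext_iff, funext_iff, eq_comm]

lemma coeff_linearFormProd (A : Matrix (Fin q) (Fin q) ℂ) {p s : Fin q → ℕ}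
    (hp : p ∈ V n q) (hs : ∑ i, s i = n) :
    coeff (Finsupp.equivFunOnFinite.symm p) (linearFormProd A s) = MG n A p s := by
  classical
  simp_rw [linearFormProd_eq_sum_MG A hs, coeff_sum, coeff_C_mul,
    coeff_prod_X_pow_equivFunOnFinite, mul_ite, mul_one, mul_zero]
  rw [sum_ite_eq' (V n q) p, if_pos hp]

lemma linearForm_mul (A B : Matrix (Fin q) (Fin q) ℂ) (i : Fin q) :
    linearForm (B * A) i = bind₁ (linearForm A) (linearForm B i) := by
  simp_rw [linearForm, map_sum, map_mul, bind₁_C_right, bind₁_X_right, linearForm,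
    mul_sum, Matrix.mul_apply, map_sum, sum_mul, map_mul, mul_assoc]
  exact sum_comm

lemma linearFormProd_mul (A B : Matrix (Fin q) (Fin q) ℂ) (t : Fin q → ℕ) :
    linearFormProd (B * A) t = bind₁ (linearForm A) (linearFormProd B t) := by
  simp_rw [linearFormProd, map_prod, map_pow, linearForm_mul]

lemma sum_MG_mul_MG (A B : Matrix (Fin q) (Fin q) ℂ) {p t : Fin q → ℕ}
    (hp : p ∈ V n q) (ht : ∑ i, t i = n) :
    ∑ s ∈ V n q, MG n A p s * MG n B s t = MG n (B * A) p t := by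
  rw [← coeff_linearFormProd (B * A) hp ht, linearFormProd_mul,
    linearFormProd_eq_sum_MG B ht, map_sum, coeff_sum]
  refine sum_congr rfl fun s hs => ?_
  simp_rw [map_mul, bind₁_C_right, map_prod, map_pow, bind₁_X_right, coeff_C_mul]
  rw [← linearFormProd, coeff_linearFormProd A hp (mem_filter.mp hs).2, mul_comm]

lemma linearFormProd_diagonal (d : Fin q → ℂ) (t : Fin q → ℕ) :
    linearFormProd (Matrix.diagonal d) t = C (∏ i, d i ^ t i) * ∏ i, X i ^ t i := by
  simp_rw [linearFormProd, linearForm, Matrix.diagonal_apply, apply_ite C, map_zero, ite_mul,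
    zero_mul, sum_ite_eq, mem_univ, if_true, mul_pow, prod_mul_distrib, map_prod, map_pow]

lemma MG_diagonal (d : Fin q → ℂ) {p t : Fin q → ℕ} (hp : p ∈ V n q) (ht : ∑ i, t i = n) :
    MG n (Matrix.diagonal d) p t = if p = t then ∏ i, d i ^ t i else 0 := by
  classical
  rw [← coeff_linearFormProd _ hp ht, linearFormProd_diagonal, coeff_C_mul,
    coeff_prod_X_pow_equivFunOnFinite, mul_ite, mul_one, mul_zero]
  simp only [eq_comm]

lemma MG_mul_diagonal (A : Matrix (Fin q) (Fin q) ℂ) (d : Fin q → ℂ) {s t : Fin q → ℕ}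
    (hs : s ∈ V n q) (ht : ∑ i, t i = n) :
    MG n (A * Matrix.diagonal d) s t = (∏ i, d i ^ s i) * MG n A s t := by
  classical
  rw [← sum_MG_mul_MG _ _ hs ht]
  rw [sum_congr rfl fun u hu => by
      rw [MG_diagonal d hs (mem_filter.mp hu).2, ite_mul, zero_mul],
    sum_ite_eq, if_pos hs]

lemma MG_map_star (A : Matrix (Fin q) (Fin q) ℂ) (p s : Fin q → ℕ) :
    MG n (A.map star) p s = star (MG n A p s) := by
  simp [MG]

end MPolynomials

lemma Matrix.mul_eq_smul_one_comm {m K : Type*} [Fintype m] [DecidableEq m] [Field K]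
    {A B : Matrix m m K} {c : K} (hc : c ≠ 0) (h : A * B = c • 1) : B * A = c • 1 := by
  have hinv : A * (c⁻¹ • B) = 1 := by
    rw [Matrix.mul_smul, h, smul_smul, inv_mul_cancel₀ hc, one_smul]
  have hinv' : c⁻¹ • (B * A) = 1 := by rw [← Matrix.smul_mul]; exact mul_eq_one_comm.mp hinv
  rw [← hinv', smul_smul, mul_inv_cancel₀ hc, one_smul]

section SignedSymmetric

open scoped Matrix

variable {q : ℕ} [NeZero q]

noncomputable def firstSign (q : ℕ) [NeZero q] (i : Fin q) : ℂ := if i = 0 then -1 else 1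

lemma firstSign_mul_self (i : Fin q) : firstSign q i * firstSign q i = 1 := by
  unfold firstSign; split_ifs <;> norm_num

lemma star_firstSign : star (firstSign q) = firstSign q := by
  funext i; by_cases hi : i = 0 <;> simp [firstSign, hi]

lemma prod_firstSign_pow (s : Fin q → ℕ) : ∏ i, firstSign q i ^ s i = (-1) ^ s 0 := by
  rw [prod_eq_single 0 (fun i _ hi => by simp [firstSign, hi]) (by simp)]
  simp [firstSign]

lemma diagonal_firstSign_mul_self :
    Matrix.diagonal (firstSign q) * Matrix.diagonal (firstSign q) = 1 := by
  rw [Matrix.diagonal_mul_diagonal, ← Matrix.diagonal_one]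
  exact congrArg _ (funext firstSign_mul_self)

lemma transpose_eq_diagonal_firstSign_mul_mul (G : Matrix (Fin q) (Fin q) ℂ)
    (hrow : ∀ j, G 0 j = 1) (hcol : ∀ i, i ≠ 0 → G i 0 = -1)
    (hcore : ∀ i j, i ≠ 0 → j ≠ 0 → G i j = G j i) :
    Gᵀ = Matrix.diagonal (firstSign q) * G * Matrix.diagonal (firstSign q) := by
  ext i j
  rw [Matrix.transpose_apply, Matrix.mul_diagonal, Matrix.diagonal_mul]
  by_cases hi : i = 0 <;> by_cases hj : j = 0
  · subst hi hj; simp [firstSign]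
  · subst hi; simp [firstSign, hj, hrow, hcol]
  · subst hj; simp [firstSign, hi, hrow, hcol]
  · simp [firstSign, hi, hj, hcore j i hj hi]

lemma map_star_mul_diagonal_firstSign_mul (G : Matrix (Fin q) (Fin q) ℂ)
    (hG : G * Gᴴ = (q : ℂ) • 1)
    (hrow : ∀ j, G 0 j = 1) (hcol : ∀ i, i ≠ 0 → G i 0 = -1)
    (hcore : ∀ i j, i ≠ 0 → j ≠ 0 → G i j = G j i) :
    G.map star * Matrix.diagonal (firstSign q) * G =
      Matrix.diagonal fun i => (q : ℂ) * firstSign q i := by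
  set D := Matrix.diagonal (firstSign q)
  have hGG : Gᴴ * G = (q : ℂ) • 1 :=
    Matrix.mul_eq_smul_one_comm (Nat.cast_ne_zero.mpr (NeZero.ne q)) hG
  have hDstar : Dᴴ = D := by rw [Matrix.diagonal_conjTranspose, star_firstSign]
  have hmap : G.map star = D * Gᴴ * D := by
    rw [← Matrix.transpose_conjTranspose, transpose_eq_diagonal_firstSign_mul_mul G hrow hcol hcore,
      Matrix.conjTranspose_mul, Matrix.conjTranspose_mul, hDstar, mul_assoc]
  calc G.map star * D * G = D * Gᴴ * (D * D) * G := by rw [hmap]; simp only [mul_assoc]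
    _ = D * (Gᴴ * G) := by rw [diagonal_firstSign_mul_self, mul_one, mul_assoc]
    _ = Matrix.diagonal fun i => (q : ℂ) * firstSign q i := by
      rw [hGG, Matrix.mul_smul, mul_one, ← Matrix.diagonal_smul]; rfl

end SignedSymmetric

theorem stmt6_general (q n : ℕ) [NeZero q]
    (G : Matrix (Fin q) (Fin q) ℂ) (hG : G * G.conjTranspose = (q : ℂ) • 1)
    (hrow : ∀ j, G 0 j = 1) (hcol : ∀ i, i ≠ 0 → G i 0 = -1)
    (hcore : ∀ i j, i ≠ 0 → j ≠ 0 → G i j = G j i)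
    (p t : Fin q → ℕ) (hp : p ∈ V n q) (ht : t ∈ V n q) :
    ∑ s ∈ V n q, (-1 : ℂ) ^ (s 0) * MG n G p s * (starRingEnd ℂ) (MG n G s t) =
      (-1 : ℂ) ^ (t 0) * (q : ℂ) ^ n * (if p = t then 1 else 0) := by
  have htn : ∑ i, t i = n := (mem_filter.mp ht).2
  have hsign : ∀ s ∈ V n q, (-1 : ℂ) ^ s 0 * MG n G p s * starRingEnd ℂ (MG n G s t) =
      MG n G p s * MG n (G.map star * Matrix.diagonal (firstSign q)) s t := by
    intro s hs
    rw [MG_mul_diagonal _ _ hs htn, MG_map_star, prod_firstSign_pow, starRingEnd_apply]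
    ring
  rw [sum_congr rfl hsign, sum_MG_mul_MG _ _ hp htn,
    map_star_mul_diagonal_firstSign_mul G hG hrow hcol hcore, MG_diagonal _ hp htn]
  split_ifs
  · rw [prod_congr rfl fun i _ => mul_pow _ _ _, prod_mul_distrib, prod_pow_eq_pow_sum, htn,
      prod_firstSign_pow]
    ring
  · simp

theorem stmt6 (q n : ℕ) [NeZero q] (hq : 2 ≤ q) (hn : 0 < n)
    (G : Matrix (Fin q) (Fin q) ℂ) (hG : G * G.conjTranspose = (q : ℂ) • 1)
    (hrow : ∀ j, G 0 j = 1) (hcol : ∀ i, i ≠ 0 → G i 0 = -1)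
    (hcore : ∀ i j, i ≠ 0 → j ≠ 0 → G i j = G j i)
    (p t : Fin q → ℕ) (hp : p ∈ V n q) (ht : t ∈ V n q) :
    ∑ s ∈ V n q, (-1 : ℂ) ^ (s 0) * MG n G p s * (starRingEnd ℂ) (MG n G s t) =
      (-1 : ℂ) ^ (t 0) * (q : ℂ) ^ n * (if p = t then 1 else 0) :=
  stmt6_general q n G hG hrow hcol hcore p t hp ht
end
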